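/- arXiv:2202.12975 — 8 statements merged into one kernel-verified Lean document; each statement's English description precedes it below -/
import Mathlib

section
/- For all a, b, c, d, e, f ∈ ℂ, the 3×3 matrix over ℂ whose three rows are the cross products L(a,e) × L(b,f), L(a,d) × L(c,f), and L(b,d) × L(c,e) has determinant zero. (Pascal's theorem in coordinates: for six points A = τ(a), …, F = τ(f) on the conic 𝒦, the three cross-hair intersection points AE ∩ BF, AD ∩ CF, BD ∩ CE of the array [A B C; F E D] are collinear.) -/
open Matrix

/-- `L x y` is the coordinate vector of the line through the conic points
`τ x = (1, x, x²)` and `τ y = (1, y, y²)` on the conic `z₀z₂ = z₁²`. -/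
def pascalLine (x y : ℂ) : Fin 3 → ℂ := ![x * y, -(x + y), 1]

/-- **Pascal's theorem in coordinates**: for six points `A = τ a, …, F = τ f` on the
conic, the three cross-hair intersection points `AE ∩ BF`, `AD ∩ CF`, `BD ∩ CE`
of the array `[A B C; F E D]` (given by the cross products of line vectors) are
collinear, i.e. the determinant of the matrix of their coordinate vectors vanishes. -/
theorem pascal_theorem (a b c d e f : ℂ) :
    Matrix.det (Matrix.of
      ![crossProduct (pascalLine a e) (pascalLine b f),
        crossProduct (pascalLine a d) (pascalLine c f),
        crossProduct (pascalLine b d) (pascalLine c e)]) = 0 := by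
  simp [pascalLine, crossProduct, Matrix.det_fin_three]
  ring
end

section
/- For all a, b, c, d, e, f ∈ ℂ, each of the three points L(a,e) × L(b,f), L(a,d) × L(c,f), L(b,d) × L(c,e) has zero dot product with the vector u(a,b,c,d,e,f) = (u₀,u₁,u₂). (The vector (u₀,u₁,u₂) gives the line coordinates of the Pascal line of the array [A B C; F E D] for A = τ(a), …, F = τ(f).) -/
open Matrix

/-- The coordinate vector `(u₀, u₁, u₂)` of the Pascal line of the array
`[τ a, τ b, τ c; τ f, τ e, τ d]`. -/
def pascalVec (a b c d e f : ℂ) : Fin 3 → ℂ :=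
  ![a*b*d*e - a*b*d*f - a*c*d*e + a*c*e*f + b*c*d*f - b*c*e*f,
    -(a*b*e) + a*b*f + a*c*d - a*c*f + a*d*f - a*e*f - b*c*d + b*c*e - b*d*e + b*e*f + c*d*e - c*d*f,
    -(a*d) + a*e + b*d - b*f - c*e + c*f]

/-- Each of the three cross-hair intersection points `AE ∩ BF`, `AD ∩ CF`, `BD ∩ CE`
lies on the line with coordinates `(u₀, u₁, u₂)`: the Pascal line of the array
`[A B C; F E D]`. -/
theorem pascal_vec_contains_crosshairs (a b c d e f : ℂ) :
    dotProduct (crossProduct (pascalLine a e) (pascalLine b f)) (pascalVec a b c d e f) = 0 ∧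
    dotProduct (crossProduct (pascalLine a d) (pascalLine c f)) (pascalVec a b c d e f) = 0 ∧
    dotProduct (crossProduct (pascalLine b d) (pascalLine c e)) (pascalVec a b c d e f) = 0 := by
  refine ⟨?_, ?_, ?_⟩ <;>
  · simp only [pascalLine, pascalVec, crossProduct, dotProduct, Fin.sum_univ_three]
    simp [Matrix.cons_val_zero, Matrix.cons_val_one]
    ring
end

section
/- Given complex numbers a, b, c, d, e, f, we have u₀ = u₁ = u₂ = 0 if and only if at least one of the following six conditions holds: C₁: a=b=c; C₂: d=e=f; C₃: a=b and e=f; C₄: b=c and d=e; C₅: a=c and d=f; C₆: a=f and b=e and c=d. -/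
private lemma quad4 {x y z w : ℂ} (h : x * y * z * w = 0) :
    x = 0 ∨ y = 0 ∨ z = 0 ∨ w = 0 := by
  rcases mul_eq_zero.mp h with h' | h'
  · rcases mul_eq_zero.mp h' with h'' | h''
    · rcases mul_eq_zero.mp h'' with h3 | h3
      · exact Or.inl h3
      · exact Or.inr (Or.inl h3)
    · exact Or.inr (Or.inr (Or.inl h''))
  · exact Or.inr (Or.inr (Or.inr h'))

/-- The set-theoretic description of the indeterminacy locus of the Pascal map for
the symbol `[A B C; F E D]`: the coordinates `u₀, u₁, u₂` of the Pascal line of the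
array `[τ a, τ b, τ c; τ f, τ e, τ d]` all vanish if and only if one of the six
conditions `C₁, …, C₆` holds. -/
theorem pascal_vanishing_iff (a b c d e f : ℂ) :
    (a*b*d*e - a*b*d*f - a*c*d*e + a*c*e*f + b*c*d*f - b*c*e*f = 0 ∧
     -(a*b*e) + a*b*f + a*c*d - a*c*f + a*d*f - a*e*f - b*c*d + b*c*e - b*d*e + b*e*f
       + c*d*e - c*d*f = 0 ∧
     -(a*d) + a*e + b*d - b*f - c*e + c*f = 0) ↔
    ((a = b ∧ b = c) ∨
     (d = e ∧ e = f) ∨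
     (a = b ∧ e = f) ∨
     (b = c ∧ d = e) ∨
     (a = c ∧ d = f) ∨
     (a = f ∧ b = e ∧ c = d)) := by
  constructor
  · rintro ⟨h0, h1, h2⟩
    -- helper sub-proofs
    -- case a = b : (a-c)*(e-f) = 0
    have caseAB : a = b → (a = b ∧ b = c) ∨ (d = e ∧ e = f) ∨ (a = b ∧ e = f) ∨
        (b = c ∧ d = e) ∨ (a = c ∧ d = f) ∨ (a = f ∧ b = e ∧ c = d) := by
      intro hab
      have h : (a - c) * (e - f) = 0 := by linear_combination h2 + (d - f) * hab
      rcases mul_eq_zero.mp h with h' | h'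
      · exact Or.inl ⟨hab, hab ▸ (sub_eq_zero.mp h')⟩
      · exact Or.inr (Or.inr (Or.inl ⟨hab, sub_eq_zero.mp h'⟩))
    -- case a = c : (a-b)*(f-d) = 0
    have caseAC : a = c → (a = b ∧ b = c) ∨ (d = e ∧ e = f) ∨ (a = b ∧ e = f) ∨
        (b = c ∧ d = e) ∨ (a = c ∧ d = f) ∨ (a = f ∧ b = e ∧ c = d) := by
      intro hac
      have h : (a - b) * (f - d) = 0 := by linear_combination h2 + (f - e) * hac
      rcases mul_eq_zero.mp h with h' | h'
      · have hab := sub_eq_zero.mp h'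
        exact Or.inl ⟨hab, hab ▸ hac⟩
      · exact Or.inr (Or.inr (Or.inr (Or.inr (Or.inl ⟨hac, (sub_eq_zero.mp h').symm⟩))))
    -- case b = c under a = f : (a-b)*(e-d) = 0
    have caseFBC : a = f → b = c → (a = b ∧ b = c) ∨ (d = e ∧ e = f) ∨ (a = b ∧ e = f) ∨
        (b = c ∧ d = e) ∨ (a = c ∧ d = f) ∨ (a = f ∧ b = e ∧ c = d) := by
      intro haf hbc
      have h : (a - b) * (e - d) = 0 := by linear_combination h2 + (f - e) * hbc
      rcases mul_eq_zero.mp h with h' | h'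
      · exact Or.inl ⟨sub_eq_zero.mp h', hbc⟩
      · exact Or.inr (Or.inr (Or.inr (Or.inl ⟨hbc, (sub_eq_zero.mp h').symm⟩)))
    -- main factorization: L(a) = u0 + a u1 + a² u2 = -(a-b)(a-c)(a-f)(d-e)
    have La : (a - b) * (a - c) * (a - f) * (d - e) = 0 := by
      linear_combination -h0 - a * h1 - a ^ 2 * h2
    rcases quad4 La with h | h | h | h
    · exact caseAB (sub_eq_zero.mp h)
    · exact caseAC (sub_eq_zero.mp h)
    · -- a = f
      have haf := sub_eq_zero.mp h
      have Lb : (a - b) * (b - c) * (b - e) * (d - f) = 0 := by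
        linear_combination -h0 - b * h1 - b ^ 2 * h2
      have Lc : (a - c) * (b - c) * (c - d) * (e - f) = 0 := by
        linear_combination -h0 - c * h1 - c ^ 2 * h2
      rcases quad4 Lb with hb | hb | hb | hb
      · exact caseAB (sub_eq_zero.mp hb)
      · exact caseFBC haf (sub_eq_zero.mp hb)
      · -- b = e
        have hbe := sub_eq_zero.mp hb
        rcases quad4 Lc with hc | hc | hc | hc
        · exact caseAC (sub_eq_zero.mp hc)
        · exact caseFBC haf (sub_eq_zero.mp hc)
        · exact Or.inr (Or.inr (Or.inr (Or.inr (Or.inr ⟨haf, hbe, sub_eq_zero.mp hc⟩))))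
        · -- e = f : then a = f = e = b, so a = b and e = f : C3
          have hef := sub_eq_zero.mp hc
          exact Or.inr (Or.inr (Or.inl ⟨haf.trans (hef.symm.trans hbe.symm), hef⟩))
      · -- d = f
        have hdf := sub_eq_zero.mp hb
        rcases quad4 Lc with hc | hc | hc | hc
        · exact Or.inr (Or.inr (Or.inr (Or.inr (Or.inl ⟨sub_eq_zero.mp hc, hdf⟩))))
        · exact caseFBC haf (sub_eq_zero.mp hc)
        · -- c = d, and d = f = a, so a = c and d = f : C5
          have hcd := sub_eq_zero.mp hc
          exact Or.inr (Or.inr (Or.inr (Or.inr (Or.inl ⟨(hcd.trans (hdf.trans haf.symm)).symm, hdf⟩))))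
        · -- e = f, d = f : C2
          have hef := sub_eq_zero.mp hc
          exact Or.inr (Or.inl ⟨hdf.trans hef.symm, hef⟩)
    · -- d = e : (b-c)*(d-f) = 0
      have hde := sub_eq_zero.mp h
      have h' : (b - c) * (d - f) = 0 := by linear_combination h2 + (a - c) * hde
      rcases mul_eq_zero.mp h' with h'' | h''
      · exact Or.inr (Or.inr (Or.inr (Or.inl ⟨sub_eq_zero.mp h'', hde⟩)))
      · have hdf := sub_eq_zero.mp h''
        exact Or.inr (Or.inl ⟨hde, hde ▸ hdf⟩)
  · rintro (⟨h1, h2⟩ | ⟨h1, h2⟩ | ⟨h1, h2⟩ | ⟨h1, h2⟩ | ⟨h1, h2⟩ | ⟨h1, h2, h3⟩) <;>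
      subst h1 <;> subst h2 <;> try subst h3
    all_goals refine ⟨by ring, by ring, by ring⟩
end

section
/- In the polynomial ring ℂ[m,p,t], for each i = 0, 1, 2, the polynomial t² divides uᵢ(m, m+t, m+p·t, −1, 0, 1) − t·λᵢ, where λ = (λ₀, λ₁, λ₂) = (−mp, 2m − pm + p, p − 2). (That is, after the substitution a = m, b = m+t, c = m+pt, d = −1, e = 0, f = 1 corresponding to blowing up the polydiagonal a = b = c, each uᵢ is divisible by t, and the quotient at t = 0 gives the line coordinates λ_p of the limiting Pascal line in the (3,1,1,1) case.) -/
open MvPolynomial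

namespace Pascal3111

noncomputable section

/-- The coordinates `(u₀, u₁, u₂)` of the Pascal line of the array
`[τ a, τ b, τ c; τ f, τ e, τ d]`, over any commutative ring. -/
def u {R : Type*} [CommRing R] (a b c d e f : R) : Fin 3 → R :=
  ![a*b*d*e - a*b*d*f - a*c*d*e + a*c*e*f + b*c*d*f - b*c*e*f,
    -(a*b*e) + a*b*f + a*c*d - a*c*f + a*d*f - a*e*f - b*c*d + b*c*e - b*d*e + b*e*f + c*d*e - c*d*f,
    -(a*d) + a*e + b*d - b*f - c*e + c*f]

/-- The variables `m, p, t` of the polynomial ring `ℂ[m,p,t]`. -/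
def m : MvPolynomial (Fin 3) ℂ := X 0
def p : MvPolynomial (Fin 3) ℂ := X 1
def t : MvPolynomial (Fin 3) ℂ := X 2

/-- In the `(3,1,1,1)` case: after the substitution `a = m`, `b = m + t`, `c = m + pt`,
`d = -1`, `e = 0`, `f = 1` (blowing up the polydiagonal `a = b = c`), each `uᵢ` is
divisible by `t`, and modulo `t²` the quotient is `λ = (-mp, 2m - pm + p, p - 2)`,
the line coordinates of the limiting Pascal line. -/
theorem pascal_3111_limit :
    ∀ i : Fin 3,
      t ^ 2 ∣ u m (m + t) (m + p * t) (-1) 0 1 i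
        - t * (![-(m * p), 2 * m - p * m + p, p - 2] i) := by
  intro i
  fin_cases i
  · exact ⟨-p, by simp [u]; ring⟩
  · exact ⟨p, by simp [u]; ring⟩
  · exact ⟨0, by simp [u]; ring⟩

end

end Pascal3111
end

section
/- Let m ∈ ℂ with m ∉ {−1, 0, 1}, and for p ∈ ℂ set λ_p = (−mp, 2m − pm + p, p − 2) ∈ ℂ³. Then: (i) for every p, the dot product of λ_p with (1, m, m²) is zero (so every limiting Pascal line passes through M = τ(m)); (ii) λ_p ≠ 0 for every p; and (iii) for all p ≠ q, the vectors λ_p and λ_q are linearly independent over ℂ. (Hence p ↦ [λ_p] is an injection of the exceptional fibre into the pencil of lines through M; this is the (3,1,1,1) case proposition.) -/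
open Matrix

/-- `λ_p`, the limiting Pascal line of the array `[A B C; F E D]` when `A = B = C`
collapse to `M = τ m` along the blow-up direction `p`, with `D = τ(-1)`, `E = τ 0`,
`F = τ 1`. -/
def lam (m p : ℂ) : Fin 3 → ℂ := ![-(m * p), 2 * m - p * m + p, p - 2]

/-- The `(3,1,1,1)` case: every limiting Pascal line `λ_p` passes through `M = τ m`,
each `λ_p` is a nonzero vector, and distinct parameters give projectively distinct
lines; hence `p ↦ [λ_p]` is an injection of the exceptional fibre into the pencil of
lines through `M`. -/
theorem pascal_3111_pencil (m : ℂ) (hm : m ∉ ({-1, 0, 1} : Set ℂ)) :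
    (∀ p : ℂ, dotProduct (lam m p) ![1, m, m ^ 2] = 0) ∧
    (∀ p : ℂ, lam m p ≠ 0) ∧
    (∀ p q : ℂ, p ≠ q → LinearIndependent ℂ ![lam m p, lam m q]) := by
  have hm0 : m ≠ 0 := fun h => hm (by simp [h])
  have hnz : ∀ p : ℂ, lam m p ≠ 0 := by
    intro p h
    have h2 := congrFun h 2
    have h1 := congrFun h 1
    simp [lam] at h2 h1
    have hp : p = 2 := by linear_combination h2
    rw [hp] at h1
    have : (2 : ℂ) = 0 := by linear_combination h1
    norm_num at this
  refine ⟨?_, hnz, ?_⟩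
  · intro p
    simp [lam, dotProduct, Fin.sum_univ_three]
    ring
  · intro p q hpq
    rw [linearIndependent_fin2]
    refine ⟨hnz q, fun a ha => ?_⟩
    have h0 := congrFun ha 0
    have h2 := congrFun ha 2
    simp [lam] at h0 h2
    have haq : a * q = p :=
      mul_left_cancel₀ hm0 (show m * (a * q) = m * p by linear_combination h0)
    have ha1 : a = 1 := by linear_combination (haq - h2) / 2
    rw [ha1, one_mul] at haq
    exact hpq haq.symm
end

section
/- In the polynomial ring ℂ[m,n,p,t], for each i = 0, 1, 2, the polynomial t² divides uᵢ(m, m+t, 1, −1, n, n+p·t) − t·μᵢ, where μ = (μ₀, μ₁, μ₂) = (m²p − mp − n² − n, m²p − 2mp + n² + 2n + p + 1, −mp − n + p − 1). (That is, after the substitution a = m, b = m+t, c = 1, d = −1, e = n, f = n+pt corresponding to blowing up the polydiagonal a = b, e = f, each uᵢ is divisible by t, and the quotient at t = 0 gives the line coordinates μ_p of the limiting Pascal line in the (2,2,1,1) case.) -/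
open MvPolynomial

namespace Pascal2211

noncomputable section

/-- The coordinates `(u₀, u₁, u₂)` of the Pascal line of the array
`[τ a, τ b, τ c; τ f, τ e, τ d]`, over any commutative ring. -/
def u {R : Type*} [CommRing R] (a b c d e f : R) : Fin 3 → R :=
  ![a*b*d*e - a*b*d*f - a*c*d*e + a*c*e*f + b*c*d*f - b*c*e*f,
    -(a*b*e) + a*b*f + a*c*d - a*c*f + a*d*f - a*e*f - b*c*d + b*c*e - b*d*e + b*e*f + c*d*e - c*d*f,
    -(a*d) + a*e + b*d - b*f - c*e + c*f]

/-- The variables `m, n, p, t` of the polynomial ring `ℂ[m,n,p,t]`. -/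
def m : MvPolynomial (Fin 4) ℂ := X 0
def n : MvPolynomial (Fin 4) ℂ := X 1
def p : MvPolynomial (Fin 4) ℂ := X 2
def t : MvPolynomial (Fin 4) ℂ := X 3

/-- In the `(2,2,1,1)` case: after the substitution `a = m`, `b = m + t`, `c = 1`,
`d = -1`, `e = n`, `f = n + pt` (blowing up the polydiagonal `a = b, e = f`), each
`uᵢ` is divisible by `t`, and modulo `t²` the quotient is
`μ = (m²p - mp - n² - n, m²p - 2mp + n² + 2n + p + 1, -mp - n + p - 1)`,
the line coordinates of the limiting Pascal line. -/
theorem pascal_2211_limit :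
    ∀ i : Fin 3,
      t ^ 2 ∣ u m (m + t) 1 (-1) n (n + p * t) i
        - t * (![m ^ 2 * p - m * p - n ^ 2 - n,
                 m ^ 2 * p - 2 * m * p + n ^ 2 + 2 * n + p + 1,
                 -(m * p) - n + p - 1] i) := by
  intro i
  fin_cases i
  · exact ⟨(m - n - 1) * p, by simp only [u]; norm_num [Matrix.cons_val_zero]; ring⟩
  · exact ⟨(m + n) * p, by simp only [u]; norm_num [Matrix.cons_val_one, Matrix.head_cons]; ring⟩
  · exact ⟨-p, by simp only [u]; norm_num [Matrix.cons_val_two, Matrix.tail_cons, Matrix.head_cons]; ring⟩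

end

end Pascal2211
end

section
/- For all p, q, r ∈ ℂ, the 3×3 matrix over ℂ whose rows are the cross products L(p,p) × L(q,r), L(q,q) × L(p,r), and L(r,r) × L(p,q) has determinant zero. (That is, for the points P = τ(p), Q = τ(q), R = τ(r) on the conic, the three points 𝕋_P ∩ QR, 𝕋_Q ∩ PR, 𝕋_R ∩ PQ — each tangent line meeting the opposite chord — are collinear; their common line is the axis of perspectivity 𝔠 of the triangle PQR and its polar triangle, and it is the limiting Pascal for the symbol pattern [x y z; y z x] in the (2,2,2) case.) -/
open Matrix

/-- For points `P = τ p`, `Q = τ q`, `R = τ r` on the conic, the three points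
`𝕋_P ∩ QR`, `𝕋_Q ∩ PR`, `𝕋_R ∩ PQ` (each tangent meeting the opposite chord) are
collinear: their common line is the axis of perspectivity `𝔠` of the triangle `PQR`
and its polar triangle, the limiting Pascal for the pattern `[x y z; y z x]` in the
`(2,2,2)` case. -/
theorem tangent_chord_collinear (p q r : ℂ) :
    Matrix.det (Matrix.of
      ![crossProduct (pascalLine p p) (pascalLine q r),
        crossProduct (pascalLine q q) (pascalLine p r),
        crossProduct (pascalLine r r) (pascalLine p q)]) = 0 := by
  simp [pascalLine, crossProduct, Matrix.det_fin_three]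
  ring
end

section
/- For all p, q, r ∈ ℂ, the 3×3 matrix over ℂ whose rows are the cross products (1,p,p²) × (L(q,q) × L(r,r)), (1,q,q²) × (L(p,p) × L(r,r)), and (1,r,r²) × (L(p,p) × L(q,q)) has determinant zero. (Chasles' perspectivity: for points P = τ(p), Q = τ(q), R = τ(r) on the conic with polar triangle P′Q′R′ — where P′ = 𝕋_Q ∩ 𝕋_R is the pole of QR, and similarly for Q′, R′ — the three lines PP′, QQ′, RR′ are concurrent.) -/
open Matrix

/-- **Chasles' perspectivity**: for points `P = τ p`, `Q = τ q`, `R = τ r` on the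
conic with polar triangle `P′Q′R′` (where `P′ = 𝕋_Q ∩ 𝕋_R` is the pole of `QR`, and
similarly for `Q′`, `R′`), the three lines `PP′`, `QQ′`, `RR′` are concurrent. -/
theorem chasles_perspectivity (p q r : ℂ) :
    Matrix.det (Matrix.of
      ![crossProduct ![1, p, p ^ 2] (crossProduct (pascalLine q q) (pascalLine r r)),
        crossProduct ![1, q, q ^ 2] (crossProduct (pascalLine p p) (pascalLine r r)),
        crossProduct ![1, r, r ^ 2] (crossProduct (pascalLine p p) (pascalLine q q))]) = 0 := by
  simp only [pascalLine, crossProduct, Matrix.det_fin_three]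
  simp [Matrix.cons_val_zero, Matrix.cons_val_one]
  ring
end
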